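/- Let N ≥ 1 and t : Fin N → ℝ. Define the N-qubit GHZ vector v : (Fin N → Fin 2) → ℂ by v(f) = 1/√2 if f is the all-zeros string, v(f) = i/√2 if f is the all-ones string, and v(f) = 0 otherwise, and define the matrix M indexed by (Fin N → Fin 2) with entries M(f,g) = Π_{k} O_{t k}(f k, g k), where O_s is the 2×2 matrix O_s = [[0, e^{−is}],[e^{is}, 0]] (equal to cos s · σX + sin s · σY). Then Σ_{f,g} conj(v f) · M(f,g) · v(g) = sin(Σ_k t k). (For the GHZ state |ψ⟩ = (|0…0⟩ + i|1…1⟩)/√2 and single-qubit observables cos(t_k)σX + sin(t_k)σY, the full correlator equals sin(Σ_k t_k).) -/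
import Mathlib


open Real

/-- The single-qubit observable `cos s · σX + sin s · σY = [[0, e^{−is}],[e^{is}, 0]]`. -/
noncomputable def Oobs (s : ℝ) : Matrix (Fin 2) (Fin 2) ℂ :=
  !![0, Complex.exp (-(s : ℂ) * Complex.I); Complex.exp ((s : ℂ) * Complex.I), 0]

/-- The `N`-qubit GHZ vector `(|0…0⟩ + i|1…1⟩)/√2`. -/
noncomputable def ghzVec (N : ℕ) : (Fin N → Fin 2) → ℂ := fun f =>
  if ∀ k, f k = 0 then ((1 / Real.sqrt 2 : ℝ) : ℂ)
  else if ∀ k, f k = 1 then Complex.I * ((1 / Real.sqrt 2 : ℝ) : ℂ)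
  else 0

lemma Oobs00 (s : ℝ) : Oobs s 0 0 = 0 := by simp [Oobs]
lemma Oobs11 (s : ℝ) : Oobs s 1 1 = 0 := by simp [Oobs]
lemma Oobs01 (s : ℝ) : Oobs s 0 1 = Complex.exp (-(s : ℂ) * Complex.I) := by simp [Oobs]
lemma Oobs10 (s : ℝ) : Oobs s 1 0 = Complex.exp ((s : ℂ) * Complex.I) := by simp [Oobs]

lemma fin2_ne_zero {a : Fin 2} (h : a ≠ 0) : a = 1 := by omega
lemma fin2_ne_one {a : Fin 2} (h : a ≠ 1) : a = 0 := by omega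

/-- For the GHZ state `(|0…0⟩ + i|1…1⟩)/√2` and single-qubit observables
`cos(t_k)σX + sin(t_k)σY`, the full correlator equals `sin(Σ_k t_k)`. -/
theorem ghz_full_correlator (N : ℕ) (hN : 1 ≤ N) (t : Fin N → ℝ) :
    ∑ f : Fin N → Fin 2, ∑ g : Fin N → Fin 2,
        (starRingEnd ℂ) (ghzVec N f) * (∏ k, Oobs (t k) (f k) (g k)) * ghzVec N g
      = ((Real.sin (∑ k, t k) : ℝ) : ℂ) := by
  classical
  have k0 : Fin N := ⟨0, hN⟩
  set z : Fin N → Fin 2 := fun _ => 0 with hz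
  set o : Fin N → Fin 2 := fun _ => 1 with ho
  have hzo : z ≠ o := by
    intro h
    have := congrFun h k0
    simp [z, o] at this
  have hno : ¬ ∀ k, o k = 0 := fun h => by simpa [o] using h k0
  have hnz : ¬ ∀ k, z k = 1 := fun h => by simpa [z] using h k0
  have hvz : ghzVec N z = ((1 / Real.sqrt 2 : ℝ) : ℂ) := by
    simp [ghzVec, z]
  have hvo : ghzVec N o = Complex.I * ((1 / Real.sqrt 2 : ℝ) : ℂ) := by
    simp only [ghzVec, if_neg hno]
    simp [o]
  have hvother : ∀ f, f ≠ z → f ≠ o → ghzVec N f = 0 := by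
    intro f hfz hfo
    have h1 : ¬ ∀ k, f k = 0 := fun h => hfz (funext fun k => h k)
    have h2 : ¬ ∀ k, f k = 1 := fun h => hfo (funext fun k => h k)
    simp [ghzVec, h1, h2]
  have hpzo : (∏ k, Oobs (t k) (z k) (o k)) = Complex.exp (-(∑ k, t k : ℝ) * Complex.I) := by
    simp only [z, o, Oobs01, ← Complex.exp_sum]
    congr 1
    push_cast
    simp only [neg_mul]
    rw [Finset.sum_neg_distrib, ← Finset.sum_mul]
  have hpoz : (∏ k, Oobs (t k) (o k) (z k)) = Complex.exp ((∑ k, t k : ℝ) * Complex.I) := by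
    simp only [z, o, Oobs10, ← Complex.exp_sum]
    congr 1
    push_cast
    rw [Finset.sum_mul]
  have innerz : ∑ g : Fin N → Fin 2,
      (starRingEnd ℂ) (ghzVec N z) * (∏ k, Oobs (t k) (z k) (g k)) * ghzVec N g
      = (starRingEnd ℂ) (ghzVec N z) * (∏ k, Oobs (t k) (z k) (o k)) * ghzVec N o := by
    apply Finset.sum_eq_single_of_mem o (Finset.mem_univ _)
    intro g _ hg
    by_cases hgz : g = z
    · rw [hgz]
      have : (∏ k, Oobs (t k) (z k) (z k)) = 0 :=
        Finset.prod_eq_zero (Finset.mem_univ k0) (by show Oobs (t k0) (z k0) (z k0) = 0; simp [z, Oobs00])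
      rw [this]; ring
    · rw [hvother g hgz hg]; ring
  have innero : ∑ g : Fin N → Fin 2,
      (starRingEnd ℂ) (ghzVec N o) * (∏ k, Oobs (t k) (o k) (g k)) * ghzVec N g
      = (starRingEnd ℂ) (ghzVec N o) * (∏ k, Oobs (t k) (o k) (z k)) * ghzVec N z := by
    apply Finset.sum_eq_single_of_mem z (Finset.mem_univ _)
    intro g _ hg
    by_cases hgo : g = o
    · rw [hgo]
      have : (∏ k, Oobs (t k) (o k) (o k)) = 0 :=
        Finset.prod_eq_zero (Finset.mem_univ k0) (by show Oobs (t k0) (o k0) (o k0) = 0; simp [o, Oobs11])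
      rw [this]; ring
    · rw [hvother g hg hgo]; ring
  rw [Finset.sum_eq_add_of_mem z o (Finset.mem_univ _) (Finset.mem_univ _) hzo
    (by
      intro f _ hf
      apply Finset.sum_eq_zero
      intro g _
      rw [hvother f hf.1 hf.2]
      simp)]
  rw [innerz, innero, hvz, hvo, hpzo, hpoz]
  have hs : ((1 / Real.sqrt 2 : ℝ) : ℂ) * ((1 / Real.sqrt 2 : ℝ) : ℂ) = ((1/2 : ℝ) : ℂ) := by
    rw [← Complex.ofReal_mul, div_mul_div_comm, Real.mul_self_sqrt] <;> norm_num
  rw [Complex.ofReal_sin, Complex.sin, map_mul, Complex.conj_I, Complex.conj_ofReal]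
  push_cast at hs ⊢
  ring_nf at hs ⊢
  rw [hs]
  ring
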